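/- arXiv:1808.08697 — 3 statements merged into one kernel-verified Lean document; each statement's English description precedes it below -/
import Mathlib

section
/- Let A be a finite type with |A| ≥ 2. The subgroup of Aut(A^ℤ) generated by the shift σ_A together with all symbol permutations π̄ (for π a permutation of A) is isomorphic, as a group, to ℤ × Perm A. (When |A| is prime, this subgroup is the group PAut(|A|), so in particular PAut(n) ≅ ℤ × Sₙ for every prime n.) -/
open Function

/-- The shift map on `ℤ → A`. -/
def shiftMap (A : Type*) : (ℤ → A) → (ℤ → A) := fun x i => x (i + 1)

/-- The shift map as a permutation of `ℤ → A`. -/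
def shiftPerm (A : Type*) : Equiv.Perm (ℤ → A) where
  toFun := shiftMap A
  invFun x i := x (i - 1)
  left_inv x := funext fun i => by simp [shiftMap]
  right_inv x := funext fun i => by simp [shiftMap]

/-- Finite types carry the discrete topology. -/
instance fintypeDiscreteTopology (A : Type*) [Fintype A] : TopologicalSpace A := ⊥

/-- The automorphism group of the full shift `A^ℤ`: shift-commuting self-homeomorphisms of
`ℤ → A`, as a subgroup of the permutation group of `ℤ → A`. -/
def FullShiftAut (A : Type*) [Fintype A] : Subgroup (Equiv.Perm (ℤ → A)) where
  carrier := { f | Continuous ⇑f ∧ Continuous ⇑f.symm ∧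
      ∀ x, f (shiftMap A x) = shiftMap A (f x) }
  one_mem' := ⟨continuous_id, continuous_id, fun _ => rfl⟩
  mul_mem' := by
    rintro f g ⟨hf1, hf2, hf3⟩ ⟨hg1, hg2, hg3⟩
    refine ⟨?_, ?_, fun x => ?_⟩
    · exact hf1.comp hg1
    · exact hg2.comp hf2
    · show f (g (shiftMap A x)) = shiftMap A (f (g x))
      rw [hg3, hf3]
  inv_mem' := by
    rintro f ⟨hf1, hf2, hf3⟩
    refine ⟨hf2, hf1, fun x => ?_⟩
    apply f.injective
    rw [show f (f⁻¹ (shiftMap A x)) = shiftMap A x from f.apply_symm_apply _, hf3,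
      show f (f⁻¹ x) = x from f.apply_symm_apply x]

/-- The symbol permutation determined by a permutation of the alphabet. -/
def symbolPerm {A : Type*} (π : Equiv.Perm A) : Equiv.Perm (ℤ → A) :=
  Equiv.piCongrRight fun _ => π

/-- The partial shift on the first track. -/
def partialShift₁ (B C : Type*) : Equiv.Perm (ℤ → B × C) where
  toFun x i := ((x (i + 1)).1, (x i).2)
  invFun x i := ((x (i - 1)).1, (x i).2)
  left_inv x := funext fun i => by simp
  right_inv x := funext fun i => by simp

/-- The partial shift on the second track. -/
def partialShift₂ (B C : Type*) : Equiv.Perm (ℤ → B × C) where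
  toFun x i := ((x i).1, (x (i + 1)).2)
  invFun x i := ((x i).1, (x (i - 1)).2)
  left_inv x := funext fun i => by simp
  right_inv x := funext fun i => by simp

/-- `PAut[B;C]`: the subgroup of the automorphism group of `(B × C)^ℤ` generated by the two
partial shifts and all symbol permutations. -/
def PAut (B C : Type*) : Subgroup (Equiv.Perm (ℤ → B × C)) :=
  Subgroup.closure
    ({partialShift₁ B C, partialShift₂ B C} ∪ Set.range (symbolPerm (A := B × C)))

/-! The shift commutes with every symbol permutation, so `(n, π) ↦ σⁿ ∘ π̄` is a homomorphism
`ℤ × Perm A → Perm (ℤ → A)` whose image is the subgroup generated by `σ` and the `π̄`. It is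
injective as soon as `A` has two letters `a ≠ b`, because `σⁿ = π̄` forces `n = 0`: the constant
sequence `b` gives `π b = b`, and the sequence equal to `a` at `0` and `b` elsewhere, read at `-n`,
gives `a = π b` unless `n = 0`. The two subgroups `⟨σ⟩ ≅ ℤ` and `{π̄} ≅ Perm A` therefore commute
and meet trivially. -/

section FullShift

variable {A : Type*}

lemma shiftPerm_zpow_apply (n : ℤ) (x : ℤ → A) (i : ℤ) : (shiftPerm A ^ n) x i = x (i + n) := by
  induction n using Int.induction_on generalizing x i with
  | zero => simp
  | succ n ih =>
    rw [zpow_add_one, Equiv.Perm.mul_apply, ih]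
    exact congrArg x (by ring)
  | pred n ih =>
    rw [zpow_sub_one, Equiv.Perm.mul_apply, ih]
    show x (i + -n - 1) = x (i + (-n - 1))
    ring_nf

@[simp]
lemma symbolPerm_apply (π : Equiv.Perm A) (x : ℤ → A) (i : ℤ) : symbolPerm π x i = π (x i) := rfl

def symbolPermHom (A : Type*) : Equiv.Perm A →* Equiv.Perm (ℤ → A) where
  toFun := symbolPerm
  map_one' := rfl
  map_mul' _ _ := rfl

lemma symbolPermHom_injective : Injective (symbolPermHom A) := by
  intro π ρ h
  ext a
  exact congrFun (Equiv.ext_iff.mp h fun _ => a) 0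

lemma commute_shiftPerm_symbolPerm (π : Equiv.Perm A) :
    Commute (shiftPerm A) (symbolPerm π) :=
  Equiv.ext fun _ => rfl

lemma eq_zero_of_shiftPerm_zpow_eq_symbolPerm [Nontrivial A] {n : ℤ} {π : Equiv.Perm A}
    (h : shiftPerm A ^ n = symbolPerm π) : n = 0 := by
  have hx (x : ℤ → A) (i : ℤ) : x (i + n) = π (x i) := by
    simpa only [shiftPerm_zpow_apply, symbolPerm_apply] using congrFun (Equiv.congr_fun h x) i
  obtain ⟨a, b, hab⟩ := exists_pair_ne A
  have hb : π b = b := (hx (fun _ => b) 0).symm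
  by_contra hn
  have := hx (fun j => if j = 0 then a else b) (-n)
  simp only [neg_add_cancel, if_true, neg_eq_zero, hn, if_false, hb] at this
  exact hab this

noncomputable def shiftSymbolHom (A : Type*) :
    Multiplicative ℤ × Equiv.Perm A →* Equiv.Perm (ℤ → A) :=
  (zpowersHom _ (shiftPerm A)).noncommCoprod (symbolPermHom A)
    fun _ π => (commute_shiftPerm_symbolPerm π).zpow_left _

lemma shiftSymbolHom_injective [Nontrivial A] : Injective (shiftSymbolHom A) := by
  refine (MonoidHom.noncommCoprod_injective _ _ _).mpr ⟨?_, symbolPermHom_injective, ?_⟩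
  · rw [injective_iff_map_eq_one]
    intro n hn
    exact Multiplicative.toAdd.injective (eq_zero_of_shiftPerm_zpow_eq_symbolPerm (π := 1) hn)
  · rw [disjoint_iff_inf_le]
    rintro _ ⟨⟨n, rfl⟩, π, hπ⟩
    have hn := eq_zero_of_shiftPerm_zpow_eq_symbolPerm hπ.symm
    simp [hn]

lemma shiftSymbolHom_range :
    (shiftSymbolHom A).range =
      Subgroup.closure ({shiftPerm A} ∪ Set.range (symbolPerm (A := A))) := by
  refine (MonoidHom.noncommCoprod_range _ _ _).trans ?_
  rw [Subgroup.closure_union, ← Subgroup.zpowers_eq_closure, Subgroup.range_zpowersHom]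
  exact congrArg _ (Subgroup.closure_eq (symbolPermHom A).range).symm

end FullShift

/-- the subgroup of `Aut(A^ℤ)` generated by the shift and the symbol permutations
is isomorphic to `ℤ × Perm A`. -/
theorem stmt2 (A : Type) [Fintype A] (hA : 2 ≤ Fintype.card A) :
    Nonempty
      (↥(Subgroup.closure ({shiftPerm A} ∪ Set.range (symbolPerm (A := A)))) ≃*
        Multiplicative ℤ × Equiv.Perm A) := by
  have : Nontrivial A := Fintype.one_lt_card_iff_nontrivial.mp hA
  exact ⟨(MulEquiv.subgroupCongr shiftSymbolHom_range).symm.trans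
    (MonoidHom.ofInjective shiftSymbolHom_injective).symm⟩
end

section
/- Let F be a field, let p be a prime with ringChar F ≠ p, let d, k ∈ ℕ, and let G be a subgroup of GL(Fin d, F) such that g^(p^k) = 1 for every g ∈ G. Then G is finite. -/
/-!
Pass to the algebraic closure and induct on the dimension. If the monoid `S` acts irreducibly,
Burnside's theorem (Jacobson density plus Schur's lemma) says that `S` spans `End V`. The
eigenvalues of every `s ∈ S` are `N`-th roots of unity, so traces of elements of `S` take finitely
many values, and by nondegeneracy of the trace form `s ↦ (tr (s b))_b`, with `b` running over a
basis of `End V` chosen inside `S`, is an injection into a finite set. Otherwise `S` preserves a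
proper nonzero subspace `W`; an element `u` acting trivially on `W` and on `V ⧸ W` satisfies
`(u - 1)² = 0`, hence `1 = u ^ N = 1 + N (u - 1)`, and `u = 1` because `N` is invertible.
-/

open Module Matrix

theorem one_add_pow_of_mul_self_eq_zero {R : Type*} [Semiring R] {n : R} (hn : n * n = 0)
    (m : ℕ) : (1 + n) ^ m = 1 + m • n := by
  induction m with
  | zero => simp
  | succ m ih =>
    rw [pow_succ, ih, add_mul, one_mul, smul_mul_assoc, mul_add, mul_one, hn, add_zero, succ_nsmul]
    abel

theorem eq_one_of_pow_eq_one_of_mul_self_sub_one_eq_zero {K R : Type*} [Field K] [Ring R]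
    [Algebra K R] {N : ℕ} (hN : (N : K) ≠ 0) {u : R} (hu : u ^ N = 1)
    (h : (u - 1) * (u - 1) = 0) : u = 1 := by
  have hN' : (N : K) • (u - 1) = 0 := by
    have := one_add_pow_of_mul_self_eq_zero h N
    rwa [add_sub_cancel, hu, left_eq_add, ← Nat.cast_smul_eq_nsmul K] at this
  exact sub_eq_zero.mp ((smul_eq_zero.mp hN').resolve_left hN)

theorem MonoidHom.injective_of_forall_pow_eq_one {M M' : Type*} [Monoid M] [Monoid M']
    {N : ℕ} (hN : N ≠ 0) (hM : ∀ x : M, x ^ N = 1) (f : M →* M') (hf : ∀ x, f x = 1 → x = 1) :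
    Function.Injective f := by
  intro x y hxy
  obtain ⟨n, rfl⟩ := Nat.exists_eq_succ_of_ne_zero hN
  have : x ^ n * y = 1 := hf _ (by rw [map_mul, ← hxy, ← map_mul, ← pow_succ, hM, map_one])
  rw [← one_mul y, ← hM x, pow_succ', mul_assoc, this, mul_one]

theorem MonoidHom.forall_pow_eq_one_of_mem_mrange {M M' : Type*} [Monoid M] [Monoid M']
    {N : ℕ} (hM : ∀ x : M, x ^ N = 1) (f : M →* M') : ∀ y ∈ MonoidHom.mrange f, y ^ N = 1 := by
  rintro _ ⟨x, rfl⟩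
  rw [← map_pow, hM, map_one]

theorem Nat.Prime.cast_ne_zero_of_ringChar_ne {R : Type*} [NonAssocRing R] [Nontrivial R]
    {p : ℕ} (hp : p.Prime) (hchar : ringChar R ≠ p) : (p : R) ≠ 0 := fun h ↦
  (hp.eq_one_or_self_of_dvd _ (ringChar.dvd h)).elim CharP.ringChar_ne_one hchar

section LinearAlgebra

variable {K V : Type*} [Field K] [AddCommGroup V] [Module K V]

theorem Module.End.sub_one_mul_self_eq_zero {R : Type*} [Ring R] [Module R V] {u : End R V}
    {W : Submodule R V} (hW : ∀ x ∈ W, u x = x) (hVW : ∀ x, u x - x ∈ W) :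
    (u - 1) * (u - 1) = 0 := by
  ext x
  simpa [sub_eq_zero] using hW _ (hVW x)

theorem Module.End.ext_iff_trace_mul_right [FiniteDimensional K V] {f g : End K V} :
    f = g ↔ ∀ x, LinearMap.trace K V (f * x) = LinearMap.trace K V (g * x) := by
  refine ⟨fun h _ ↦ h ▸ rfl, fun h ↦ ?_⟩
  let b := Module.finBasis K V
  let e := LinearMap.toMatrixAlgEquiv b
  refine e.injective (Matrix.ext_iff_trace_mul_right.mpr fun X ↦ ?_)
  have := h (e.symm X)
  rw [LinearMap.trace_eq_matrix_trace K b, LinearMap.trace_eq_matrix_trace K b] at this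
  change (e (f * e.symm X)).trace = (e (g * e.symm X)).trace at this
  simpa using this

theorem Module.End.HasEigenvalue.pow_eq_one {f : End K V} {μ : K} (hμ : f.HasEigenvalue μ)
    {N : ℕ} (hf : f ^ N = 1) : μ ^ N = 1 := by
  obtain ⟨v, hv⟩ := hμ.exists_hasEigenvector
  have h : (μ ^ N - 1) • v = 0 := by
    rw [sub_smul, one_smul, ← hv.pow_apply N, hf, End.one_apply, sub_self]
  exact sub_eq_zero.mp ((smul_eq_zero.mp h).resolve_right hv.2)

theorem Module.End.finite_trace_image_setOf_pow_eq_one [IsAlgClosed K] [FiniteDimensional K V]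
    {N : ℕ} (hN : 0 < N) : (LinearMap.trace K V '' {f | f ^ N = 1}).Finite := by
  classical
  refine (((Polynomial.nthRootsFinset N (1 : K)).sym (finrank K V)).finite_toSet.image
    fun m : Sym K (finrank K V) ↦ (m : Multiset K).sum).subset ?_
  rintro _ ⟨f, hf, rfl⟩
  have hsplit : f.charpoly.Splits := IsAlgClosed.splits _
  refine ⟨⟨f.charpoly.roots, ?_⟩, Finset.mem_sym_iff.mpr fun μ hμ ↦ ?_, ?_⟩
  · rw [Polynomial.splits_iff_card_roots.mp hsplit, LinearMap.charpoly_natDegree]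
  · rw [Polynomial.mem_nthRootsFinset hN]
    refine HasEigenvalue.pow_eq_one ?_ hf
    rw [hasEigenvalue_iff_isRoot_charpoly]
    exact (Polynomial.mem_roots'.mp hμ).2
  · exact (trace_eq_sum_roots_charpoly_of_splits hsplit).symm

theorem Subalgebra.eq_top_of_isSimpleModule [IsAlgClosed K] [FiniteDimensional K V]
    (A : Subalgebra K (End K V)) [IsSimpleModule A V] : A = ⊤ := by
  have : Module.Finite (End A V) V := .of_restrictScalars_finite K _ _
  refine eq_top_iff.mpr fun f _ ↦ ?_
  -- Schur's lemma: the commutant of `A` consists of scalars, so `f` commutes with it.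
  have hf : ∀ (φ : End A V) (v : V), f (φ v) = φ (f v) := fun φ v ↦ by
    obtain ⟨c, rfl⟩ := (IsSimpleModule.algebraMap_end_bijective_of_isAlgClosed (A := A) K).2 φ
    simp
  obtain ⟨a, ha⟩ := Module.Finite.toModuleEnd_moduleEnd_surjective (R := A) (M := V)
    { f with map_smul' := hf }
  convert a.2
  ext v
  exact (congr($ha v)).symm

end LinearAlgebra

namespace Submonoid

variable {K V : Type*} [Field K] [AddCommGroup V] [Module K V]

theorem finite_of_span_eq_top_of_finite_trace [FiniteDimensional K V]
    {S : Submonoid (End K V)} (hspan : Submodule.span K (S : Set (End K V)) = ⊤) {T : Set K}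
    (hT : T.Finite) (hST : ∀ s ∈ S, LinearMap.trace K V s ∈ T) : Finite S := by
  obtain ⟨b, hbS, hb, hb_li⟩ := exists_linearIndependent K (S : Set (End K V))
  have : Finite b := hb_li.setFinite
  have : Finite T := hT
  refine Finite.of_injective
    (fun s : S ↦ fun x : b ↦ (⟨_, hST _ (S.mul_mem s.2 (hbS x.2))⟩ : T)) fun s t hst ↦ ?_
  refine Subtype.ext (End.ext_iff_trace_mul_right.mpr fun x ↦ ?_)
  have : (LinearMap.trace K V).comp (LinearMap.mulLeft K (s : End K V)) =
      (LinearMap.trace K V).comp (LinearMap.mulLeft K (t : End K V)) :=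
    LinearMap.ext_on (hb.trans hspan) fun x hx ↦ congr(($hst ⟨x, hx⟩ : K))
  exact congr($this x)

theorem finite_of_isSimpleModule_adjoin [IsAlgClosed K] [FiniteDimensional K V]
    {N : ℕ} (hN : 0 < N) {S : Submonoid (End K V)} (hS : ∀ s ∈ S, s ^ N = 1)
    [IsSimpleModule (Algebra.adjoin K (S : Set (End K V))) V] : Finite S := by
  have hspan : Submodule.span K (S : Set (End K V)) = ⊤ := by
    rw [← S.closure_eq, ← Algebra.adjoin_eq_span,
      Subalgebra.eq_top_of_isSimpleModule (Algebra.adjoin K (S : Set (End K V))),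
      Algebra.top_toSubmodule]
  exact finite_of_span_eq_top_of_finite_trace hspan (End.finite_trace_image_setOf_pow_eq_one hN)
    fun s hs ↦ ⟨s, hS s hs, rfl⟩

theorem finite_of_finite_subrepresentation_of_finite_quotient {N : ℕ}
    (hN : (N : K) ≠ 0) {S : Submonoid (End K V)} (hS : ∀ s ∈ S, s ^ N = 1) (W : Submodule K V)
    (hW : ∀ s : S, W ≤ W.comap (s : End K V))
    (hsub : Finite (MonoidHom.mrange (Representation.subrepresentation S.subtype W hW)))
    (hquot : Finite (MonoidHom.mrange (Representation.quotient S.subtype W hW))) :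
    Finite S := by
  have hN0 : N ≠ 0 := by rintro rfl; exact hN Nat.cast_zero
  refine Finite.of_injective _ (MonoidHom.injective_of_forall_pow_eq_one hN0
    (fun s ↦ Subtype.ext (hS s s.2)) (MonoidHom.prod
      (Representation.subrepresentation S.subtype W hW).mrangeRestrict
      (Representation.quotient S.subtype W hW).mrangeRestrict) fun s hs ↦ ?_)
  have hsub : ∀ x ∈ W, (s : End K V) x = x := fun x hx ↦
    congr((($(congr(Subtype.val $(congr(Prod.fst $hs)))) ⟨x, hx⟩ : W) : V))
  have hquot : ∀ x, (s : End K V) x - x ∈ W := fun x ↦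
    (Submodule.Quotient.eq W).mp congr($(congr(Subtype.val $(congr(Prod.snd $hs)))) (W.mkQ x))
  exact Subtype.ext (eq_one_of_pow_eq_one_of_mul_self_sub_one_eq_zero hN (hS s s.2)
    (End.sub_one_mul_self_eq_zero hsub hquot))

theorem finite_of_forall_pow_eq_one [IsAlgClosed K] [FiniteDimensional K V] {N : ℕ}
    (hN : (N : K) ≠ 0) (S : Submonoid (End K V)) (hS : ∀ s ∈ S, s ^ N = 1) : Finite S := by
  induction hn : finrank K V using Nat.strong_induction_on generalizing V with
  | _ n ih =>
  rcases subsingleton_or_nontrivial V with hV | hV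
  · exact Finite.of_subsingleton
  let A := Algebra.adjoin K (S : Set (End K V))
  by_cases hA : IsSimpleModule A V
  · exact finite_of_isSimpleModule_adjoin (Nat.pos_of_ne_zero (by rintro rfl; simp at hN)) hS
  obtain ⟨W, hW_bot, hW_top⟩ : ∃ W : Submodule A V, W ≠ ⊥ ∧ W ≠ ⊤ := by
    by_contra! h
    exact hA { eq_bot_or_eq_top := fun W ↦ or_iff_not_imp_left.mpr (h W) }
  let W' := W.restrictScalars K
  have hW' : ∀ s : S, W' ≤ W'.comap (s : End K V) := fun s _ hx ↦
    W.smul_mem (⟨s, Algebra.subset_adjoin s.2⟩ : A) hx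
  have hW'_pos : 0 < finrank K W' :=
    finrank_pos_iff.mpr (Submodule.nontrivial_iff_ne_bot.mpr (by simpa [W'] using hW_bot))
  have hW'_lt : finrank K W' < n := hn ▸ Submodule.finrank_lt (by simpa [W'] using hW_top)
  have hquot_lt : finrank K (V ⧸ W') < n := by
    have := W'.finrank_quotient_add_finrank
    omega
  have hS' : ∀ s : S, s ^ N = 1 := fun s ↦ Subtype.ext (hS s s.2)
  exact finite_of_finite_subrepresentation_of_finite_quotient hN hS W' hW'
    (ih _ hW'_lt _ (MonoidHom.forall_pow_eq_one_of_mem_mrange hS' _) rfl)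
    (ih _ hquot_lt _ (MonoidHom.forall_pow_eq_one_of_mem_mrange hS' _) rfl)

end Submonoid

/-- a subgroup of `GL(d, F)` of exponent dividing `p ^ k`, where `p` is a prime
different from the characteristic of `F`, is finite. -/
theorem stmt12 (F : Type) [Field F] (p : ℕ) (hp : p.Prime) (hchar : ringChar F ≠ p)
    (d k : ℕ) (G : Subgroup (GL (Fin d) F)) (hG : ∀ g ∈ G, g ^ (p ^ k) = 1) :
    Finite ↥G := by
  let E := AlgebraicClosure F
  let χ : GL (Fin d) F →* End E (Fin d → E) :=
    (Matrix.toLinAlgEquiv' (R := E) (n := Fin d)).toMonoidHom.comp <|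
      ((algebraMap F E).mapMatrix : Matrix (Fin d) (Fin d) F →+* _).toMonoidHom.comp
        (Units.coeHom _)
  have hχ : Function.Injective χ :=
    Matrix.toLinAlgEquiv'.injective.comp <|
      (Matrix.map_injective (algebraMap F E).injective).comp Units.val_injective
  have hpk : ((p ^ k : ℕ) : E) ≠ 0 := by
    rw [← map_natCast (algebraMap F E), Nat.cast_pow]
    exact (map_ne_zero _).mpr (pow_ne_zero k (hp.cast_ne_zero_of_ringChar_ne hchar))
  have := Submonoid.finite_of_forall_pow_eq_one hpk (MonoidHom.mrange (χ.comp G.subtype))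
    (MonoidHom.forall_pow_eq_one_of_mem_mrange (fun g ↦ Subtype.ext (hG g g.2)) _)
  exact Finite.of_injective (χ.comp G.subtype).mrangeRestrict fun g h hgh ↦
    Subtype.val_injective (hχ congr(Subtype.val $hgh))
end

section
/- Let p and q be distinct primes. For every k ∈ ℕ, every family of fields F : Fin k → Type and every family of dimensions d : Fin k → ℕ, there is no injective group homomorphism from the free product (⨁_{n : ℕ} ZMod p) * (⨁_{n : ℕ} ZMod q) into the product group ∏ i, GL(Fin (d i), F i). In other words, (ℤ/p)^ω * (ℤ/q)^ω is not a subdirect product of finitely many linear groups. -/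
/-!
Fix a coordinate `i`. Since `p ≠ q`, one of `p`, `q` is invertible in `F i`, say `p`. The image
of `(ℤ/p)^ω` in `GL(d i, F i)` is a commutative group of exponent `p`, so it lies in the units of
a commutative finite-dimensional (hence Artinian) `F i`-algebra and consists of roots of `X ^ p - 1`.
As `p` is invertible, its derivative is a unit at these roots, so two of them that agree modulo
the nilradical are equal (uniqueness in Newton's method); modulo the nilradical the algebra is a
finite product of fields, each with finitely many roots. Hence that image is finite.

So for every coordinate the image of one of the two factors is finite. Finitely many homomorphisms
with finite image from an infinite group have a common nontrivial element `a` (resp. `b`) in their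
kernels. Then every coordinate kills `⁅a, b⁆`, which is nontrivial in the free product.
-/

open Polynomial in
theorem eq_of_pow_eq_one_of_isNilpotent_sub {R : Type*} [CommRing R] {n : ℕ}
    (hn : IsUnit (n : R)) {x y : R} (hx : x ^ n = 1) (hy : y ^ n = 1)
    (hxy : IsNilpotent (x - y)) : x = y := by
  nontriviality R
  have hn0 : n ≠ 0 := by rintro rfl; simp at hn
  have hroot : ∀ {z : R}, z ^ n = 1 → aeval z (X ^ n - 1 : R[X]) = 0 := fun hz => by
    simp [hz]
  have hder : IsUnit (aeval x (derivative (X ^ n - 1 : R[X]))) := by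
    simpa [derivative_X_pow] using hn.mul ((IsUnit.of_pow_eq_one hx hn0).pow (n - 1))
  obtain ⟨r, -, huniq⟩ := existsUnique_nilpotent_sub_and_aeval_eq_zero
    (by rw [hroot hx]; exact IsNilpotent.zero) hder
  exact (huniq x ⟨by simp, hroot hx⟩).trans (huniq y ⟨hxy, hroot hy⟩).symm

theorem IsArtinianRing.finite_setOf_pow_eq_one {R : Type*} [CommRing R] [IsArtinianRing R]
    {n : ℕ} (hn : IsUnit (n : R)) : {x : R | x ^ n = 1}.Finite := by
  classical
  nontriviality R
  have hn0 : n ≠ 0 := by rintro rfl; simp at hn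
  let g : R →+* ∀ I : MaximalSpectrum R, R ⧸ I.asIdeal :=
    RingHom.pi fun I => Ideal.Quotient.mk I.asIdeal
  have hinj : Set.InjOn g {x | x ^ n = 1} := by
    refine fun x hx y hy hxy => eq_of_pow_eq_one_of_isNilpotent_sub hn hx hy ?_
    rw [← mem_nilradical, IsArtinianRing.nilradical_eq_iInf, Submodule.mem_iInf]
    exact fun I => Ideal.Quotient.eq.mp (congrFun hxy I)
  have hroots : (Set.univ.pi fun I : MaximalSpectrum R =>
      {c : R ⧸ I.asIdeal | c ^ n = 1}).Finite :=
    Set.Finite.pi fun I => by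
      have := I.isMaximal
      exact (Polynomial.nthRoots n (1 : R ⧸ I.asIdeal)).toFinset.finite_toSet.subset
        fun c hc => by simpa [Polynomial.mem_nthRoots (Nat.pos_of_ne_zero hn0)] using hc
  refine Set.Finite.of_finite_image (hroots.subset ?_) hinj
  rintro _ ⟨x, hx, rfl⟩ I -
  change Ideal.Quotient.mk I.asIdeal x ^ n = 1
  rw [← map_pow, show x ^ n = 1 from hx, map_one]

open scoped IsMulCommutative in
theorem Set.Finite.of_pairwise_commute_of_pow_eq_one {F A : Type*} [Field F] [Ring A]
    [Algebra F A] [FiniteDimensional F A] {n : ℕ} (hn : (n : F) ≠ 0) {s : Set A}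
    (hcomm : s.Pairwise Commute) (hpow : ∀ x ∈ s, x ^ n = 1) : s.Finite := by
  let R := Algebra.adjoin F s
  have : IsMulCommutative R := Algebra.isMulCommutative_adjoin F fun _ ha _ hb =>
    (Set.pairwise_iff_of_refl.mp hcomm ha hb).eq
  have : IsArtinianRing R := IsArtinianRing.of_finite F R
  have hnR : IsUnit (n : R) := by
    simpa using (IsUnit.mk0 _ hn).map (algebraMap F R)
  refine ((IsArtinianRing.finite_setOf_pow_eq_one hnR).image Subtype.val).subset
    fun x hx => ⟨⟨x, Algebra.subset_adjoin hx⟩, Subtype.ext (hpow x hx), rfl⟩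

theorem MonoidHom.finite_range_units_of_pow_eq_one {F A G : Type*} [Field F] [Ring A]
    [Algebra F A] [FiniteDimensional F A] [CommGroup G] {n : ℕ} (hn : (n : F) ≠ 0)
    (hG : ∀ g : G, g ^ n = 1) (f : G →* Aˣ) : (Set.range f).Finite := by
  have hval : (Set.range fun g => (f g : A)).Finite := by
    refine .of_pairwise_commute_of_pow_eq_one hn ?_ ?_
    · rintro _ ⟨g, rfl⟩ _ ⟨h, rfl⟩ -
      exact ((Commute.all g h).map f).units_val
    · rintro _ ⟨g, rfl⟩
      rw [← Units.val_pow_eq_pow_val, ← map_pow, hG, map_one, Units.val_one]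
  exact (hval.preimage Units.val_injective.injOn).subset fun _ ⟨g, hg⟩ => ⟨g, congrArg _ hg⟩

theorem exists_ne_one_forall_map_eq_one {G ι : Type*} [Group G] [Infinite G] [Finite ι]
    {H : ι → Type*} [∀ i, Group (H i)] (f : ∀ i, G →* H i)
    (hf : ∀ i, (Set.range (f i)).Finite) : ∃ a ≠ 1, ∀ i, f i a = 1 := by
  have hrange : (Set.range (MonoidHom.pi f)).Finite :=
    (Set.Finite.pi hf).subset fun _ ⟨g, hg⟩ i _ => ⟨g, by rw [← hg]; rfl⟩
  have hinj : ¬ Function.Injective (MonoidHom.pi f) := fun h =>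
    Set.infinite_range_of_injective h hrange
  rw [injective_iff_map_eq_one] at hinj
  push Not at hinj
  obtain ⟨a, ha, ha1⟩ := hinj
  exact ⟨a, ha1, fun i => congrFun ha i⟩

theorem DirectSum.infinite_multiplicative {ι : Type*} [Infinite ι] (β : ι → Type*)
    [∀ i, AddCommMonoid (β i)] [∀ i, Nontrivial (β i)] :
    Infinite (Multiplicative (DirectSum ι β)) :=
  have : Infinite (DirectSum ι β) := DFinsupp.infinite_of_left
  Infinite.of_injective Multiplicative.toAdd Multiplicative.toAdd.injective

theorem ZModModule.multiplicative_pow_char_eq_one {n : ℕ} {M : Type*} [AddCommGroup M]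
    [Module (ZMod n) M] (g : Multiplicative M) : g ^ n = 1 := by
  rw [← ofAdd_toAdd g, ← ofAdd_nsmul, ZModModule.char_nsmul_eq_zero, ofAdd_zero]

theorem natCast_ne_zero_of_natCast_prime_eq_zero {R : Type*} [Ring R] [Nontrivial R] {p q : ℕ}
    (hp : p.Prime) (hq : q.Prime) (hpq : p ≠ q) (hp0 : (p : R) = 0) : (q : R) ≠ 0 := fun hq0 =>
  hpq ((CharP.ringChar_of_prime_eq_zero hp hp0).symm.trans (CharP.ringChar_of_prime_eq_zero hq hq0))

def mulLeftOnFiberOne (G B : Type*) [Group G] [One B] [DecidableEq B] :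
    G →* Equiv.Perm (G × B) where
  toFun g :=
    { toFun := fun z => if z.2 = 1 then (g * z.1, z.2) else z
      invFun := fun z => if z.2 = 1 then (g⁻¹ * z.1, z.2) else z
      left_inv := fun ⟨x, y⟩ => by by_cases h : y = 1 <;> simp [h]
      right_inv := fun ⟨x, y⟩ => by by_cases h : y = 1 <;> simp [h] }
  map_one' := by ext z <;> by_cases h : z.2 = 1 <;> simp [h]
  map_mul' g g' := by ext z <;> by_cases h : z.2 = 1 <;> simp [h, mul_assoc]

theorem mulLeftOnFiberOne_apply {G B : Type*} [Group G] [One B] [DecidableEq B] (g : G)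
    (z : G × B) : mulLeftOnFiberOne G B g z = if z.2 = 1 then (g * z.1, z.2) else z :=
  rfl

open scoped commutatorElement in
theorem Monoid.Coprod.commutatorElement_inl_inr_ne_one {G H : Type*} [Group G] [Group H]
    {a : G} {b : H} (ha : a ≠ 1) (hb : b ≠ 1) :
    ⁅(inl a : Coprod G H), (inr b : Coprod G H)⁆ ≠ 1 := by
  classical
  -- `G` moves the first coordinate on the fibre `H = 1`, `H` the second one on the fibre `G = 1`.
  let ρ : Coprod G H →* Equiv.Perm (G × H) :=
    lift (mulLeftOnFiberOne G H)
      ((Equiv.permCongrHom (Equiv.prodComm H G)).toMonoidHom.comp (mulLeftOnFiberOne H G))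
  have hab : ρ (inl a * inr b) (1, 1) = (1, b) := by
    simp [ρ, Equiv.permCongrHom, Equiv.permCongr_apply, mulLeftOnFiberOne_apply, hb]
  have hba : ρ (inr b * inl a) (1, 1) = (a, 1) := by
    simp [ρ, Equiv.permCongrHom, Equiv.permCongr_apply, mulLeftOnFiberOne_apply, ha]
  rw [Ne, commutatorElement_eq_one_iff_mul_comm]
  intro h
  have h11 := congrArg (ρ · (1, 1)) h
  simp only [hab, hba, Prod.mk.injEq] at h11
  exact ha h11.1.symm

open scoped commutatorElement in
/-- for distinct primes `p` and `q`, the free product `(ℤ/p)^ω * (ℤ/q)^ω` is not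
a subdirect product of finitely many linear groups. -/
theorem stmt13 (p q : ℕ) (hp : p.Prime) (hq : q.Prime) (hpq : p ≠ q)
    (k : ℕ) (F : Fin k → Type) [∀ i, Field (F i)] (d : Fin k → ℕ) :
    ¬ ∃ φ : Monoid.Coprod (Multiplicative (DirectSum ℕ fun _ => ZMod p))
          (Multiplicative (DirectSum ℕ fun _ => ZMod q)) →*
        (∀ i, GL (Fin (d i)) (F i)), Function.Injective φ := by
  rintro ⟨φ, hφ⟩
  have := Fact.mk hp
  have := Fact.mk hq
  have := DirectSum.infinite_multiplicative fun _ : ℕ => ZMod p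
  have := DirectSum.infinite_multiplicative fun _ : ℕ => ZMod q
  let α i := (Pi.evalMonoidHom _ i).comp (φ.comp Monoid.Coprod.inl)
  let β i := (Pi.evalMonoidHom _ i).comp (φ.comp Monoid.Coprod.inr)
  obtain ⟨a, ha, hαa⟩ := exists_ne_one_forall_map_eq_one (fun i : {i // (p : F i) ≠ 0} => α i)
    fun i => (α i).finite_range_units_of_pow_eq_one i.2
      ZModModule.multiplicative_pow_char_eq_one
  obtain ⟨b, hb, hβb⟩ := exists_ne_one_forall_map_eq_one (fun i : {i // (p : F i) = 0} => β i)
    fun i => (β i).finite_range_units_of_pow_eq_one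
      (natCast_ne_zero_of_natCast_prime_eq_zero hp hq hpq i.2)
      ZModModule.multiplicative_pow_char_eq_one
  refine Monoid.Coprod.commutatorElement_inl_inr_ne_one ha hb (hφ ?_)
  rw [map_commutatorElement, map_one]
  funext i
  change ⁅α i a, β i b⁆ = 1
  by_cases hi : (p : F i) = 0
  · rw [hβb ⟨i, hi⟩, commutatorElement_one_right]
  · rw [hαa ⟨i, hi⟩, commutatorElement_one_left]
end
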